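/- For X ∈ so(3), the matrix exponential exp(X) equals the identity if and only if ‖v_X‖ ∈ 2πℤ, where v_X ∈ ℝ³ is the vector with X·w = v_X × w for all w ∈ ℝ³. -/

import Mathlib

open Matrix Real
open scoped Nat

/-!
The vector triple product gives `v ⨯₃ (v ⨯₃ (v ⨯₃ w)) = -‖v‖² • (v ⨯₃ w)`, so
`X ^ 3 = -θ ^ 2 • X` with `θ = ‖v‖`. For `θ ≠ 0` the odd and even parts of the exponential
series then sum to the sine and cosine series, giving Rodrigues' formula
`exp X = 1 + (sin θ / θ) • X + ((1 - cos θ) / θ ^ 2) • X ^ 2`.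
Since `tr X = 0` and `tr X ^ 2 = -2θ² ≠ 0`, taking traces shows that `exp X = 1` forces
`cos θ = 1`; conversely `cos θ = 1` also gives `sin θ = 0`, so `exp X = 1`.
-/

section PowThree

variable {R 𝔸 : Type*} [CommSemiring R] [Semiring 𝔸] [Algebra R 𝔸] {c : R} {X : 𝔸}

theorem pow_two_mul_add_one_of_pow_three_eq_smul (hX : X ^ 3 = c • X) (k : ℕ) :
    X ^ (2 * k + 1) = c ^ k • X := by
  induction k with
  | zero => simp
  | succ k ih =>
    rw [show 2 * (k + 1) + 1 = 2 + (2 * k + 1) by ring, pow_add, ih, mul_smul_comm,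
      ← pow_succ, hX, smul_smul, pow_succ]

theorem pow_two_mul_add_two_of_pow_three_eq_smul (hX : X ^ 3 = c • X) (k : ℕ) :
    X ^ (2 * k + 2) = c ^ k • X ^ 2 := by
  rw [pow_succ, pow_two_mul_add_one_of_pow_three_eq_smul hX, smul_mul_assoc, ← sq]

end PowThree

namespace Real

theorem hasSum_sin_div {θ : ℝ} (hθ : θ ≠ 0) :
    HasSum (fun k : ℕ => (-θ ^ 2) ^ k / (2 * k + 1)!) (sin θ / θ) := by
  convert! (hasSum_sin θ).div_const θ using 1
  funext k
  rw [neg_pow, ← pow_mul, pow_succ θ (2 * k)]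
  field_simp

theorem hasSum_one_sub_cos_div_sq {θ : ℝ} (hθ : θ ≠ 0) :
    HasSum (fun k : ℕ => (-θ ^ 2) ^ k / (2 * k + 2)!) ((1 - cos θ) / θ ^ 2) := by
  convert! ((hasSum_nat_add_iff' 1).mpr (hasSum_cos θ)).div_const (-θ ^ 2) using 1
  · funext k
    rw [neg_pow, ← pow_mul, pow_succ (-1 : ℝ), mul_add, mul_one, pow_add θ (2 * k)]
    field_simp
  · simp only [Finset.range_one, Finset.sum_singleton]
    field_simp
    ring

end Real

theorem NormedSpace.exp_eq_of_pow_three_eq_neg_sq_smul {𝔸 : Type*} [Ring 𝔸] [Algebra ℝ 𝔸]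
    [TopologicalSpace 𝔸] [IsTopologicalRing 𝔸] [ContinuousSMul ℝ 𝔸] [T2Space 𝔸]
    {X : 𝔸} {θ : ℝ} (hθ : θ ≠ 0) (hX : X ^ 3 = (-θ ^ 2) • X) :
    exp X = 1 + (sin θ / θ) • X + ((1 - cos θ) / θ ^ 2) • X ^ 2 := by
  set f : ℕ → 𝔸 := fun n => (n ! : ℝ)⁻¹ • X ^ n
  have hodd : HasSum (fun k => f (2 * k + 1)) ((sin θ / θ) • X) := by
    convert! (Real.hasSum_sin_div hθ).smul_const X using 1
    funext k
    simp only [f, pow_two_mul_add_one_of_pow_three_eq_smul hX, smul_smul, div_eq_inv_mul]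
  have heven : HasSum (fun k => f (2 * k + 1 + 1)) (((1 - cos θ) / θ ^ 2) • X ^ 2) := by
    convert! (Real.hasSum_one_sub_cos_div_sq hθ).smul_const (X ^ 2) using 1
    funext k
    simp only [f, add_assoc, Nat.reduceAdd, pow_two_mul_add_two_of_pow_three_eq_smul hX, smul_smul,
      div_eq_inv_mul]
  rw [exp_eq_tsum ℝ, add_assoc]
  simpa [f] using (HasSum.even_add_odd (f := fun n => f (n + 1)) hodd heven).zero_add.tsum_eq

namespace Matrix

theorem trace_eq_sum_single_dotProduct_mulVec {n R : Type*} [Fintype n] [DecidableEq n]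
    [NonAssocSemiring R] (M : Matrix n n R) :
    M.trace = ∑ i, Pi.single i 1 ⬝ᵥ M *ᵥ Pi.single i 1 := by
  simp [trace]

section CrossProduct

variable {R : Type*} [CommRing R] {X : Matrix (Fin 3) (Fin 3) R} {v : Fin 3 → R}

theorem sq_mulVec_eq_of_mulVec_eq_cross (hv : ∀ w, X *ᵥ w = v ⨯₃ w) (w : Fin 3 → R) :
    X ^ 2 *ᵥ w = v ⨯₃ (v ⨯₃ w) := by
  rw [sq, ← mulVec_mulVec, hv, hv]

theorem pow_three_eq_of_mulVec_eq_cross (hv : ∀ w, X *ᵥ w = v ⨯₃ w) :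
    X ^ 3 = -(v ⬝ᵥ v) • X := by
  refine ext_iff_mulVec.mpr fun w => ?_
  rw [pow_succ, ← mulVec_mulVec, sq_mulVec_eq_of_mulVec_eq_cross hv, smul_mulVec, hv,
    cross_cross_eq_smul_sub_smul', dot_self_cross, zero_smul, zero_sub, neg_smul]

theorem trace_eq_zero_of_mulVec_eq_cross (hv : ∀ w, X *ᵥ w = v ⨯₃ w) : X.trace = 0 := by
  simp only [trace_eq_sum_single_dotProduct_mulVec, hv, dot_cross_self, Finset.sum_const_zero]

theorem trace_sq_eq_of_mulVec_eq_cross (hv : ∀ w, X *ᵥ w = v ⨯₃ w) :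
    (X ^ 2).trace = -2 * (v ⬝ᵥ v) := by
  have hdiag (i : Fin 3) :
      Pi.single i 1 ⬝ᵥ X ^ 2 *ᵥ Pi.single i 1 = v i * v i - v ⬝ᵥ v := by
    simp [sq_mulVec_eq_of_mulVec_eq_cross hv, cross_cross_eq_smul_sub_smul', dotProduct_comm v]
  rw [trace_eq_sum_single_dotProduct_mulVec, Finset.sum_congr rfl fun i _ => hdiag i,
    Finset.sum_sub_distrib, ← dotProduct, Finset.sum_const, Finset.card_fin]
  ring

end CrossProduct

theorem exp_eq_one_iff_cos_eq_one_of_pow_three_eq_neg_sq_smul {n : Type*} [Fintype n]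
    [DecidableEq n] {X : Matrix n n ℝ} {θ : ℝ} (hθ : θ ≠ 0) (hX : X ^ 3 = (-θ ^ 2) • X)
    (htr : X.trace = 0) (htr_sq : (X ^ 2).trace ≠ 0) :
    NormedSpace.exp X = 1 ↔ cos θ = 1 := by
  rw [NormedSpace.exp_eq_of_pow_three_eq_neg_sq_smul hθ hX, add_assoc, add_eq_left]
  constructor
  · intro h
    have htrace : (1 - cos θ) / θ ^ 2 * (X ^ 2).trace = 0 := by
      simpa [htr] using congrArg trace h
    have hcoeff := (mul_eq_zero.mp htrace).resolve_right htr_sq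
    rw [div_eq_zero_iff, sub_eq_zero] at hcoeff
    exact (hcoeff.resolve_right (pow_ne_zero 2 hθ)).symm
  · intro h
    have hsin : sin θ = 0 := by nlinarith [sin_sq_add_cos_sq θ]
    simp [h, hsin]

end Matrix

theorem stmt_1_general (X : Matrix (Fin 3) (Fin 3) ℝ)
    (v : Fin 3 → ℝ) (hv : ∀ w : Fin 3 → ℝ, X.mulVec w = crossProduct v w) :
    NormedSpace.exp X = (1 : Matrix (Fin 3) (Fin 3) ℝ) ↔
      ∃ k : ℤ, Real.sqrt (v ⬝ᵥ v) = 2 * Real.pi * k := by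
  obtain rfl | hv0 := eq_or_ne v 0
  · obtain rfl : X = 0 := ext_iff_mulVec.mpr fun w => by simp [hv]
    simp
  have hr : 0 < v ⬝ᵥ v :=
    (by simpa using dotProduct_star_self_nonneg v : 0 ≤ v ⬝ᵥ v).lt_of_ne' (by simpa using hv0)
  have hX : X ^ 3 = (-√(v ⬝ᵥ v) ^ 2) • X := by
    rw [sq_sqrt hr.le]
    exact pow_three_eq_of_mulVec_eq_cross hv
  have htr_sq : (X ^ 2).trace ≠ 0 := by
    rw [trace_sq_eq_of_mulVec_eq_cross hv]
    positivity
  rw [exp_eq_one_iff_cos_eq_one_of_pow_three_eq_neg_sq_smul (sqrt_pos.mpr hr).ne' hX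
    (trace_eq_zero_of_mulVec_eq_cross hv) htr_sq, cos_eq_one_iff]
  exact exists_congr fun k => by rw [eq_comm, mul_comm]

/-- For `X ∈ so(3)` with associated vector `v_X` (so `X·w = v_X × w`),
the matrix exponential `exp X` equals the identity iff `‖v_X‖ ∈ 2πℤ`. -/
theorem stmt_1 (X : Matrix (Fin 3) (Fin 3) ℝ) (hskew : Xᵀ = -X)
    (v : Fin 3 → ℝ) (hv : ∀ w : Fin 3 → ℝ, X.mulVec w = crossProduct v w) :
    NormedSpace.exp X = (1 : Matrix (Fin 3) (Fin 3) ℝ) ↔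
      ∃ k : ℤ, Real.sqrt (v ⬝ᵥ v) = 2 * Real.pi * k :=
  stmt_1_general X v hv
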